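/- Let V be a simple nontrivial module over g = Der(ℂ[t_1,…,t_n]). If there exists a nonzero vector u ∈ V with g_{≥0}·u = 0, then V is one-dimensional and hence trivial; consequently any nontrivial simple smooth g-module V satisfies V^{(0)} = 0, i.e., its height ℓ_V is at least 1. -/

import Mathlib

set_option synthInstance.maxHeartbeats 1000000
set_option maxHeartbeats 4000000

open MvPolynomial TensorProduct

noncomputable section

/-- The polynomial ring `ℂ[t₁,…,tₙ]`. -/
abbrev Rn (n : ℕ) := MvPolynomial (Fin n) ℂ

/-- The Witt algebra `g = Der ℂ[t₁,…,tₙ]` of polynomial vector fields. -/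
abbrev Wn (n : ℕ) := Derivation ℂ (Rn n) (Rn n)

/-- The derivation `t^α ∂ᵢ`. -/
def elt (n : ℕ) (α : Fin n →₀ ℕ) (i : Fin n) : Wn n := (monomial α (1:ℂ)) • pderiv i

/-- The size `|α| = α₁ + ⋯ + αₙ` of a multi-index, as an integer. -/
def degOf (n : ℕ) (α : Fin n →₀ ℕ) : ℤ := ((α.sum fun _ m => m : ℕ) : ℤ)

/-- The degree-`k` component `g_k = span{t^α ∂ᵢ : |α| = k+1}`. -/
def gComp (n : ℕ) (k : ℤ) : Submodule ℂ (Wn n) :=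
  Submodule.span ℂ {x | ∃ α i, degOf n α = k + 1 ∧ x = elt n α i}

/-- The subspace `g_{≥r} = ⨁_{k ≥ r} g_k`. -/
def gGe (n : ℕ) (r : ℤ) : Submodule ℂ (Wn n) := ⨆ k ≥ r, gComp n k

/-! Let `u ≠ 0` be killed by `g_{≥0}`. Commuting `t^α ∂ᵢ` past a `∂ⱼ` lowers `|α|` by one, so
`t^α ∂ᵢ` sends an `m`-fold derivative `∂_{j₁} ⋯ ∂_{jₘ} u` to a combination of `(m + 1 - |α|)`-fold
ones, and to `0` when `|α| > m`. Hence the derivatives of order `≥ 1` span a submodule. The Euler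
field `∑ tᵢ ∂ᵢ` acts on `m`-fold derivatives by `-m`, and kills `u`, so this submodule misses `u`
and is therefore `0` by simplicity. Then `∂ᵢ u = 0` too, `u` is `g`-invariant, and `V = ℂ u`. -/

namespace MvPolynomial

theorem derivation_eq_sum_smul_pderiv {R σ : Type*} [CommSemiring R] [Fintype σ]
    (D : Derivation R (MvPolynomial σ R) (MvPolynomial σ R)) :
    D = ∑ i, D (X i) • pderiv i := by
  classical
  refine derivation_ext fun j => ?_
  rw [← Derivation.coeFnAddMonoidHom_apply (∑ i, _), map_sum, Finset.sum_apply]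
  simp [pderiv_X, Pi.single_apply]

end MvPolynomial

theorem LieModule.rank_eq_one_of_lie_eq_zero {K L M : Type*} [Field K] [LieRing L]
    [LieAlgebra K L] [AddCommGroup M] [Module K M] [LieRingModule L M] [LieModule K L M]
    [IsSimpleOrder (LieSubmodule K L M)] {u : M} (hu0 : u ≠ 0) (hu : ∀ x : L, ⁅x, u⁆ = 0) :
    Module.rank K M = 1 ∧ ∀ (x : L) (v : M), ⁅x, v⁆ = 0 := by
  let N : LieSubmodule K L M :=
    { toSubmodule := K ∙ u
      lie_mem := fun {x _} hm => by
        obtain ⟨c, rfl⟩ := Submodule.mem_span_singleton.mp hm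
        simp [hu x] }
  have hN : N = ⊤ := (eq_bot_or_eq_top N).resolve_left fun h => by
    have hmem : u ∈ N := Submodule.mem_span_singleton_self u
    exact hu0 ((LieSubmodule.mem_bot u).mp (h ▸ hmem))
  have hspan (v : M) : ∃ c : K, c • u = v :=
    Submodule.mem_span_singleton.mp (hN ▸ LieSubmodule.mem_top v : v ∈ N)
  refine ⟨rank_eq_one u hu0 hspan, fun x v => ?_⟩
  obtain ⟨c, rfl⟩ := hspan v
  rw [lie_smul, hu, smul_zero]

namespace Witt

variable {n : ℕ}

theorem degOf_eq_degree (α : Fin n →₀ ℕ) : degOf n α = α.degree := rfl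

theorem elt_zero (i : Fin n) : elt n 0 i = pderiv i := by
  simp [elt]

theorem elt_mem_gGe_zero {α : Fin n →₀ ℕ} (hα : α ≠ 0) (i : Fin n) : elt n α i ∈ gGe n 0 := by
  have hdeg : 0 < α.degree := Nat.pos_of_ne_zero (mt (Finsupp.degree_eq_zero_iff α).mp hα)
  have hmem : elt n α i ∈ gComp n (α.degree - 1) :=
    Submodule.subset_span ⟨α, i, by rw [degOf_eq_degree]; ring, rfl⟩
  exact le_iSup₂ (f := fun k (_ : k ≥ 0) => gComp n k) _ (by omega) hmem

theorem span_elt : Submodule.span ℂ {x | ∃ α i, x = elt n α i} = ⊤ := by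
  refine eq_top_iff.mpr fun x _ => ?_
  rw [derivation_eq_sum_smul_pderiv x]
  refine Submodule.sum_mem _ fun i _ => ?_
  induction x (X i) using MvPolynomial.induction_on' with
  | monomial α c =>
    have : monomial α c • (pderiv i : Wn n) = c • elt n α i := by
      rw [elt, ← smul_assoc, smul_eq_C_mul, C_mul_monomial, mul_one]
    rw [this]
    exact Submodule.smul_mem _ _ (Submodule.subset_span ⟨α, i, rfl⟩)
  | add p q hp hq =>
    rw [add_smul]
    exact Submodule.add_mem _ hp hq

theorem degree_sub_single_add_one {α : Fin n →₀ ℕ} {j : Fin n} (h : α j ≠ 0) :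
    (α - Finsupp.single j 1).degree + 1 = α.degree := by
  have hle : Finsupp.single j 1 ≤ α := Finsupp.single_le_iff.mpr (Nat.one_le_iff_ne_zero.mpr h)
  simpa using congrArg Finsupp.degree (tsub_add_cancel_of_le hle)

theorem lie_elt_pderiv (α : Fin n →₀ ℕ) (i j : Fin n) :
    ⁅elt n α i, (pderiv j : Wn n)⁆ = -((α j : ℂ) • elt n (α - Finsupp.single j 1) i) := by
  classical
  refine derivation_ext fun k => ?_
  rw [Derivation.commutator_apply, Derivation.neg_apply]
  simp only [elt, Derivation.smul_apply, pderiv_X, Pi.single_apply]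
  by_cases hik : i = k
  · subst hik
    simp [apply_ite (pderiv i), pderiv_monomial, smul_monomial, mul_comm]
  · simp [apply_ite (pderiv i), Ne.symm hik]

def euler (n : ℕ) : Wn n := ∑ i, elt n (Finsupp.single i 1) i

theorem euler_mem_gGe_zero : euler n ∈ gGe n 0 :=
  Submodule.sum_mem _ fun i _ => elt_mem_gGe_zero (by simp) i

theorem lie_euler_pderiv (j : Fin n) : ⁅euler n, (pderiv j : Wn n)⁆ = -pderiv j := by
  classical
  rw [euler, sum_lie (L := Wn n) (M := Wn n), Finset.sum_eq_single j]
  · simp [lie_elt_pderiv, elt_zero]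
  · intro i _ hij
    simp [lie_elt_pderiv, hij]
  · simp

section LieModule

variable {V : Type*} [AddCommGroup V] [Module ℂ V] [LieRingModule (Wn n) V]
  [LieModule ℂ (Wn n) V]

theorem lie_mem_of_forall_lie_elt_mem {S : Submodule ℂ V} {v : V}
    (h : ∀ α i, ⁅elt n α i, v⁆ ∈ S) (x : Wn n) : ⁅x, v⁆ ∈ S := by
  have hx : x ∈ Submodule.span ℂ {x | ∃ α i, x = elt n α i} := span_elt ▸ Submodule.mem_top
  induction hx using Submodule.span_induction with
  | mem y hy => obtain ⟨α, i, rfl⟩ := hy; exact h α i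
  | zero => simp
  | add a b _ _ ha hb => rw [add_lie]; exact S.add_mem ha hb
  | smul c a _ ha => rw [smul_lie]; exact S.smul_mem c ha

variable (n) in
def pderivSpan (u : V) : ℕ → Submodule ℂ V
  | 0 => ℂ ∙ u
  | m + 1 => ⨆ j : Fin n, (pderivSpan u m).map (LieModule.toEnd ℂ (Wn n) V (pderiv j))

theorem pderivSpan_succ_le {u : V} {m : ℕ} {S : Submodule ℂ V}
    (h : ∀ j, ∀ w ∈ pderivSpan n u m, ⁅(pderiv j : Wn n), w⁆ ∈ S) :
    pderivSpan n u (m + 1) ≤ S :=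
  iSup_le fun j => Submodule.map_le_iff_le_comap.mpr fun w hw => h j w hw

theorem lie_pderiv_mem_pderivSpan_succ {u w : V} {m : ℕ} (hw : w ∈ pderivSpan n u m)
    (j : Fin n) : ⁅(pderiv j : Wn n), w⁆ ∈ pderivSpan n u (m + 1) :=
  le_iSup (fun j => (pderivSpan n u m).map (LieModule.toEnd ℂ (Wn n) V (pderiv j))) j
    ⟨w, hw, rfl⟩

theorem lie_elt_lie_pderiv (α : Fin n →₀ ℕ) (i j : Fin n) (w : V) :
    ⁅elt n α i, ⁅(pderiv j : Wn n), w⁆⁆ =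
      ⁅(pderiv j : Wn n), ⁅elt n α i, w⁆⁆ - (α j : ℂ) • ⁅elt n (α - Finsupp.single j 1) i, w⁆ := by
  have hsmul : ⁅(α j : ℂ) • elt n (α - Finsupp.single j 1) i, w⁆ =
      (α j : ℂ) • ⁅elt n (α - Finsupp.single j 1) i, w⁆ := smul_lie _ _ _
  rw [leibniz_lie, lie_elt_pderiv, neg_lie, hsmul]
  abel

theorem lie_elt_eq_zero_of_lt {u : V} (hu : ∀ x ∈ gGe n 0, ⁅x, u⁆ = 0) {m : ℕ}
    {α : Fin n →₀ ℕ} (hm : m < α.degree) (i : Fin n) {v : V} (hv : v ∈ pderivSpan n u m) :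
    ⁅elt n α i, v⁆ = 0 := by
  induction m generalizing α v with
  | zero =>
    obtain ⟨c, rfl⟩ := Submodule.mem_span_singleton.mp hv
    have hα : α ≠ 0 := by rintro rfl; simp at hm
    rw [lie_smul, hu _ (elt_mem_gGe_zero hα i), smul_zero]
  | succ m ih =>
    refine pderivSpan_succ_le (S := LinearMap.ker (LieModule.toEnd ℂ (Wn n) V (elt n α i)))
      (fun j w hw => ?_) hv
    rw [LinearMap.mem_ker, LieModule.toEnd_apply_apply, lie_elt_lie_pderiv, ih (by omega) hw,
      lie_zero, zero_sub, neg_eq_zero]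
    rcases eq_or_ne (α j) 0 with hj | hj
    · simp [hj]
    · rw [ih (by have := degree_sub_single_add_one hj; omega) hw, smul_zero]

theorem lie_elt_mem_pderivSpan {u : V} (hu : ∀ x ∈ gGe n 0, ⁅x, u⁆ = 0) {m : ℕ}
    (α : Fin n →₀ ℕ) (i : Fin n) {v : V} (hv : v ∈ pderivSpan n u m) :
    ⁅elt n α i, v⁆ ∈ pderivSpan n u (m + 1 - α.degree) := by
  induction m generalizing α v with
  | zero =>
    rcases eq_or_ne α 0 with rfl | hα
    · simpa [elt_zero] using lie_pderiv_mem_pderivSpan_succ hv i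
    · rw [lie_elt_eq_zero_of_lt hu _ i hv]
      · exact zero_mem _
      · exact Nat.pos_of_ne_zero (mt (Finsupp.degree_eq_zero_iff α).mp hα)
  | succ m ih =>
    refine pderivSpan_succ_le (S := (pderivSpan n u (m + 1 + 1 - α.degree)).comap
      (LieModule.toEnd ℂ (Wn n) V (elt n α i))) (fun j w hw => ?_) hv
    rw [Submodule.mem_comap, LieModule.toEnd_apply_apply, lie_elt_lie_pderiv]
    refine sub_mem ?_ ?_
    · rcases le_or_gt α.degree (m + 1) with hle | hlt
      · have := lie_pderiv_mem_pderivSpan_succ (ih α hw) j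
        rwa [show m + 1 - α.degree + 1 = m + 1 + 1 - α.degree by omega] at this
      · rw [lie_elt_eq_zero_of_lt hu (by omega) i hw, lie_zero]
        exact zero_mem _
    · rcases eq_or_ne (α j) 0 with hj | hj
      · rw [hj, Nat.cast_zero, zero_smul]
        exact zero_mem _
      · have hdeg := degree_sub_single_add_one hj
        refine Submodule.smul_mem _ _ ?_
        convert ih (α - Finsupp.single j 1) hw using 2
        omega

theorem pderivSpan_le_eigenspace {u : V} (hu : ∀ x ∈ gGe n 0, ⁅x, u⁆ = 0) (m : ℕ) :
    pderivSpan n u m ≤ (LieModule.toEnd ℂ (Wn n) V (euler n)).eigenspace (-m) := by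
  induction m with
  | zero =>
    rw [pderivSpan, Submodule.span_le, Set.singleton_subset_iff, SetLike.mem_coe,
      Module.End.mem_eigenspace_iff, LieModule.toEnd_apply_apply, hu _ euler_mem_gGe_zero]
    simp
  | succ m ih =>
    refine pderivSpan_succ_le fun j w hw => ?_
    have hw' : ⁅euler n, w⁆ = (-m : ℂ) • w := Module.End.mem_eigenspace_iff.mp (ih hw)
    rw [Module.End.mem_eigenspace_iff, LieModule.toEnd_apply_apply, leibniz_lie,
      lie_euler_pderiv, neg_lie, hw', lie_smul]
    push_cast
    module

theorem lie_mem_iSup_pderivSpan_succ {u : V} (hu : ∀ x ∈ gGe n 0, ⁅x, u⁆ = 0) (x : Wn n)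
    {v : V} (hv : v ∈ ⨆ m, pderivSpan n u (m + 1)) :
    ⁅x, v⁆ ∈ ⨆ m, pderivSpan n u (m + 1) := by
  refine lie_mem_of_forall_lie_elt_mem (fun α i => ?_) x
  set S := ⨆ m, pderivSpan n u (m + 1)
  have hS : S ≤ S.comap (LieModule.toEnd ℂ (Wn n) V (elt n α i)) := iSup_le fun m w hw => by
    rw [Submodule.mem_comap, LieModule.toEnd_apply_apply]
    rcases le_or_gt α.degree (m + 1) with hle | hlt
    · have := lie_elt_mem_pderivSpan hu α i hw
      rw [show m + 1 + 1 - α.degree = m + 1 - α.degree + 1 by omega] at this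
      exact le_iSup (fun m => pderivSpan n u (m + 1)) _ this
    · rw [lie_elt_eq_zero_of_lt hu hlt i hw]
      exact zero_mem _
  exact hS hv

theorem notMem_iSup_pderivSpan_succ {u : V} (hu0 : u ≠ 0)
    (hu : ∀ x ∈ gGe n 0, ⁅x, u⁆ = 0) :
    u ∉ ⨆ m, pderivSpan n u (m + 1) := by
  set T := LieModule.toEnd ℂ (Wn n) V (euler n)
  have h0 := pderivSpan_le_eigenspace hu 0 (Submodule.mem_span_singleton_self u)
  rw [Nat.cast_zero, neg_zero] at h0
  have hle : ⨆ m, pderivSpan n u (m + 1) ≤ ⨆ (μ : ℂ) (_ : μ ≠ 0), T.eigenspace μ :=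
    iSup_le fun m => (pderivSpan_le_eigenspace hu (m + 1)).trans <|
      le_iSup₂ (f := fun (μ : ℂ) (_ : μ ≠ 0) => T.eigenspace μ) _
        (neg_ne_zero.mpr (Nat.cast_ne_zero.mpr m.succ_ne_zero))
  exact fun h =>
    hu0 (Submodule.disjoint_def.mp (Module.End.eigenspaces_iSupIndep T 0) u h0 (hle h))

theorem lie_eq_zero_of_forall_gGe_zero [IsSimpleOrder (LieSubmodule ℂ (Wn n) V)] {u : V}
    (hu0 : u ≠ 0) (hu : ∀ x ∈ gGe n 0, ⁅x, u⁆ = 0) (x : Wn n) : ⁅x, u⁆ = 0 := by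
  let N : LieSubmodule ℂ (Wn n) V :=
    { toSubmodule := ⨆ m, pderivSpan n u (m + 1)
      lie_mem := fun hv => lie_mem_iSup_pderivSpan_succ hu _ hv }
  have hN : N = ⊥ := (eq_bot_or_eq_top N).resolve_right fun h => by
    have hmem : u ∈ N := h ▸ LieSubmodule.mem_top u
    exact notMem_iSup_pderivSpan_succ hu0 hu hmem
  have hpderiv (j : Fin n) : ⁅(pderiv j : Wn n), u⁆ = 0 := by
    have hmem : ⁅(pderiv j : Wn n), u⁆ ∈ N := le_iSup (fun m => pderivSpan n u (m + 1)) 0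
      (lie_pderiv_mem_pderivSpan_succ (Submodule.mem_span_singleton_self u) j)
    rwa [hN, LieSubmodule.mem_bot] at hmem
  refine (Submodule.mem_bot ℂ).mp (lie_mem_of_forall_lie_elt_mem (fun α i => ?_) x)
  rcases eq_or_ne α 0 with rfl | hα
  · rw [elt_zero, hpderiv]
    exact zero_mem _
  · rw [hu _ (elt_mem_gGe_zero hα i)]
    exact zero_mem _

end LieModule

end Witt

/-- Let `V` be a simple `g`-module. (1) If some nonzero `u ∈ V` satisfies `g_{≥0}·u = 0`,
then `V` is one-dimensional and trivial.  (2) Consequently, a nontrivial simple smooth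
`g`-module has `V^{(0)} = 0`, i.e. its height is at least `1`. -/
theorem simple_module_height_ge_one (n : ℕ) (V : Type) [AddCommGroup V] [Module ℂ V]
    [LieRingModule (Wn n) V] [LieModule ℂ (Wn n) V]
    (hsimple : IsSimpleOrder (LieSubmodule ℂ (Wn n) V)) :
    ((∃ u : V, u ≠ 0 ∧ ∀ x ∈ gGe n 0, ⁅x, u⁆ = 0) →
        Module.rank ℂ V = 1 ∧ ∀ (x : Wn n) (v : V), ⁅x, v⁆ = 0) ∧
    ((∃ (x : Wn n) (v : V), ⁅x, v⁆ ≠ 0) →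
      (∀ v : V, ∃ N : ℤ, ∀ x ∈ gGe n N, ⁅x, v⁆ = 0) →
      ∀ u : V, (∀ x ∈ gGe n 0, ⁅x, u⁆ = 0) → u = 0) := by
  have trivial_of_annihilated : (∃ u : V, u ≠ 0 ∧ ∀ x ∈ gGe n 0, ⁅x, u⁆ = 0) →
      Module.rank ℂ V = 1 ∧ ∀ (x : Wn n) (v : V), ⁅x, v⁆ = 0 := fun ⟨_, hu0, hu⟩ =>
    LieModule.rank_eq_one_of_lie_eq_zero hu0 (Witt.lie_eq_zero_of_forall_gGe_zero hu0 hu)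
  refine ⟨trivial_of_annihilated, fun ⟨x, v, hxv⟩ _ u hu => ?_⟩
  by_contra hu0
  exact hxv ((trivial_of_annihilated ⟨u, hu0, hu⟩).2 x v)
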